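/- arXiv:1610.05069 — 2 statements merged into one kernel-verified Lean document; each statement's English description precedes it below -/
import Mathlib

section
/- If T is a positive self-adjoint bounded operator on a Hilbert space that is bounded below by a positive constant c > 0, then T^{-1/2} = (2/π) ∫₀^∞ (λ²·I + T)⁻¹ dλ, where the integral converges in the operator norm topology. -/
/-!
For `l : ℝ` the resolvent `(l²·1 + T)⁻¹` is `f_l(T)` with `f_l x = (l² + x)⁻¹`, and for `x > 0`
the antiderivative `arctan (l / √x) / √x` gives `∫₀^∞ (l² + x)⁻¹ dl = π / (2√x)`. On the spectrum
of `T`, which lies in `[c, ∞)`, all `f_l` are dominated by the integrable `(l² + c)⁻¹`, so the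
integral over `l` commutes with the continuous functional calculus.
-/

open MeasureTheory Real Set Filter Topology

section InvSqAdd

variable {x : ℝ}

lemma hasDerivAt_inv_sqrt_mul_arctan_div_sqrt (hx : 0 < x) (l : ℝ) :
    HasDerivAt (fun l ↦ (√x)⁻¹ * arctan (l / √x)) (l ^ 2 + x)⁻¹ l := by
  have hs : (√x) ^ 2 = x := sq_sqrt hx.le
  have hs0 : √x ≠ 0 := (sqrt_pos.mpr hx).ne'
  refine ((((hasDerivAt_id' l).div_const √x).arctan).const_mul (√x)⁻¹).congr_deriv ?_
  field_simp
  rw [hs]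
  ring

lemma tendsto_inv_sqrt_mul_arctan_div_sqrt (hx : 0 < x) :
    Tendsto (fun l ↦ (√x)⁻¹ * arctan (l / √x)) atTop (𝓝 ((√x)⁻¹ * (π / 2))) :=
  ((tendsto_nhds_of_tendsto_nhdsWithin tendsto_arctan_atTop).comp
    (tendsto_id.atTop_div_const (sqrt_pos.mpr hx))).const_mul _

lemma integrableOn_Ioi_inv_sq_add (hx : 0 < x) :
    IntegrableOn (fun l : ℝ ↦ (l ^ 2 + x)⁻¹) (Ioi 0) :=
  integrableOn_Ioi_deriv_of_nonneg' (fun l _ ↦ hasDerivAt_inv_sqrt_mul_arctan_div_sqrt hx l)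
    (fun l _ ↦ by positivity) (tendsto_inv_sqrt_mul_arctan_div_sqrt hx)

lemma integral_Ioi_inv_sq_add (hx : 0 < x) :
    ∫ l in Ioi (0 : ℝ), (l ^ 2 + x)⁻¹ = π / 2 * (√x)⁻¹ := by
  rw [integral_Ioi_of_hasDerivAt_of_nonneg' (fun l _ ↦ hasDerivAt_inv_sqrt_mul_arctan_div_sqrt hx l)
    (fun l _ ↦ by positivity) (tendsto_inv_sqrt_mul_arctan_div_sqrt hx)]
  simp only [zero_div, arctan_zero, mul_zero, sub_zero]
  ring

end InvSqAdd

lemma ContinuousLinearMap.algebraMap_le_of_mul_norm_sq_le_re_inner {H : Type*}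
    [NormedAddCommGroup H] [InnerProductSpace ℂ H] [CompleteSpace H] {T : H →L[ℂ] H}
    (hT : IsSelfAdjoint T) {c : ℝ} (hbdd : ∀ x : H, c * ‖x‖ ^ 2 ≤ (inner ℂ (T x) x).re) :
    algebraMap ℝ (H →L[ℂ] H) c ≤ T := by
  rw [le_def, isPositive_def']
  refine ⟨hT.sub (.algebraMap _ (.all c)), fun x ↦ ?_⟩
  have hc : (inner ℂ (algebraMap ℝ (H →L[ℂ] H) c x) x).re = c * ‖x‖ ^ 2 := by
    simp [Algebra.algebraMap_eq_smul_one, ← Complex.coe_smul,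
      inner_self_eq_norm_sq_to_K, ← Complex.ofReal_pow, mul_comm]
  rw [reApplyInnerSelf, sub_apply, inner_sub_left, map_sub, RCLike.re_to_complex,
    RCLike.re_to_complex, hc, sub_nonneg]
  exact hbdd x

section Resolvent

variable {c : ℝ} {S : Set ℝ}

lemma continuousOn_uncurry_inv_sq_add (hc : 0 < c) (hS : ∀ x ∈ S, c ≤ x) (s : Set ℝ) :
    ContinuousOn (Function.uncurry fun l x : ℝ ↦ (l ^ 2 + x)⁻¹) (s ×ˢ S) :=
  ContinuousOn.inv₀ (by fun_prop) fun p hp ↦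
    (add_pos_of_nonneg_of_pos (sq_nonneg p.1) (hc.trans_le (hS p.2 hp.2))).ne'

lemma norm_inv_sq_add_le (hc : 0 < c) (hS : ∀ x ∈ S, c ≤ x) (l : ℝ) :
    ∀ x ∈ S, ‖(l ^ 2 + x)⁻¹‖ ≤ (l ^ 2 + c)⁻¹ := fun x hx ↦ by
  rw [norm_inv, Real.norm_of_nonneg (by linarith [sq_nonneg l, hS x hx])]
  gcongr
  exact hS x hx

end Resolvent

section CStarAlgebra

variable {A : Type*} [CStarAlgebra A] {a : A}

lemma ringInverse_smul_one_add_eq_cfc (ha : IsSelfAdjoint a) {r : ℝ}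
    (hr : ∀ x ∈ spectrum ℝ a, r + x ≠ 0) :
    Ring.inverse (r • 1 + a) = cfc (fun x : ℝ ↦ (r + x)⁻¹) a := by
  rw [cfc_inv (r + ·) a hr, cfc_const_add r (fun x : ℝ ↦ x) a, cfc_id' ℝ a,
    Algebra.algebraMap_eq_smul_one]

variable {c : ℝ}

lemma ringInverse_sq_smul_one_add_eq_cfc (ha : IsSelfAdjoint a) (hc : 0 < c)
    (hspec : ∀ x ∈ spectrum ℝ a, c ≤ x) (l : ℝ) :
    Ring.inverse (l ^ 2 • 1 + a) = cfc (fun x : ℝ ↦ (l ^ 2 + x)⁻¹) a :=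
  ringInverse_smul_one_add_eq_cfc ha fun x hx ↦
    (add_pos_of_nonneg_of_pos (sq_nonneg l) (hc.trans_le (hspec x hx))).ne'

lemma integrableOn_ringInverse_sq_smul_one_add (ha : IsSelfAdjoint a) (hc : 0 < c)
    (hspec : ∀ x ∈ spectrum ℝ a, c ≤ x) :
    IntegrableOn (fun l : ℝ ↦ Ring.inverse (l ^ 2 • 1 + a)) (Ioi 0) := by
  simp_rw [ringInverse_sq_smul_one_add_eq_cfc ha hc hspec]
  exact integrableOn_cfc measurableSet_Ioi _ (fun l ↦ (l ^ 2 + c)⁻¹) a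
    (continuousOn_uncurry_inv_sq_add hc hspec _)
    (.of_forall (norm_inv_sq_add_le hc hspec))
    (integrableOn_Ioi_inv_sq_add hc).hasFiniteIntegral

lemma cfc_inv_sqrt_eq_setIntegral_ringInverse (ha : IsSelfAdjoint a) (hc : 0 < c)
    (hspec : ∀ x ∈ spectrum ℝ a, c ≤ x) :
    cfc (fun x : ℝ ↦ (√x)⁻¹) a = (2 / π) • ∫ l in Ioi (0 : ℝ), Ring.inverse (l ^ 2 • 1 + a) := by
  have hpos : ∀ x ∈ spectrum ℝ a, 0 < x := fun x hx ↦ hc.trans_le (hspec x hx)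
  have hcont : ContinuousOn (fun x : ℝ ↦ π / 2 * (√x)⁻¹) (spectrum ℝ a) :=
    continuousOn_const.mul <|
      continuous_sqrt.continuousOn.inv₀ fun x hx ↦ (sqrt_pos.mpr (hpos x hx)).ne'
  calc cfc (fun x : ℝ ↦ (√x)⁻¹) a
      = cfc (fun x : ℝ ↦ 2 / π * (π / 2 * (√x)⁻¹)) a :=
        cfc_congr fun x _ ↦ by field_simp
    _ = (2 / π) • cfc (fun x : ℝ ↦ ∫ l in Ioi (0 : ℝ), (l ^ 2 + x)⁻¹) a := by
        rw [cfc_const_mul _ _ a hcont,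
          cfc_congr fun x hx ↦ integral_Ioi_inv_sq_add (hpos x hx)]
    _ = (2 / π) • ∫ l in Ioi (0 : ℝ), cfc (fun x : ℝ ↦ (l ^ 2 + x)⁻¹) a := by
        rw [cfc_setIntegral measurableSet_Ioi _ (fun l ↦ (l ^ 2 + c)⁻¹) a
          (continuousOn_uncurry_inv_sq_add hc hspec _)
          (.of_forall (norm_inv_sq_add_le hc hspec))
          (integrableOn_Ioi_inv_sq_add hc).hasFiniteIntegral]
    _ = (2 / π) • ∫ l in Ioi (0 : ℝ), Ring.inverse (l ^ 2 • 1 + a) := by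
        simp_rw [ringInverse_sq_smul_one_add_eq_cfc ha hc hspec]

end CStarAlgebra

/-- If `T` is a positive self-adjoint bounded operator on a complex Hilbert space bounded
below by `c > 0`, then `T^{-1/2} = (2/π) ∫₀^∞ (λ²·I + T)⁻¹ dλ`, the integral converging in norm
(Bochner integrability). -/
theorem stmt0 {H : Type*} [NormedAddCommGroup H] [InnerProductSpace ℂ H] [CompleteSpace H]
    (T : H →L[ℂ] H) (hT : IsSelfAdjoint T) (c : ℝ) (hc : 0 < c)
    (hbdd : ∀ x : H, c * ‖x‖ ^ 2 ≤ (inner ℂ (T x) x : ℂ).re) :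
    IntegrableOn (fun l : ℝ => Ring.inverse (l ^ 2 • (1 : H →L[ℂ] H) + T)) (Set.Ioi 0) ∧
    cfc (fun x : ℝ => (Real.sqrt x)⁻¹) T =
      (2 / Real.pi) • ∫ l in Set.Ioi (0 : ℝ), Ring.inverse (l ^ 2 • (1 : H →L[ℂ] H) + T) := by
  have hspec : ∀ x ∈ spectrum ℝ T, c ≤ x :=
    (algebraMap_le_iff_le_spectrum hT).mp (T.algebraMap_le_of_mul_norm_sq_le_re_inner hT hbdd)
  exact ⟨integrableOn_ringInverse_sq_smul_one_add hT hc hspec,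
    cfc_inv_sqrt_eq_setIntegral_ringInverse hT hc hspec⟩
end

section
/- Let H be a Hilbert space and D, D' bounded self-adjoint operators on H with D ≥ I and D' ≥ I, and suppose D − D' is compact. Then for every λ ∈ ℝ the difference (D' + iλ)⁻¹ − (D + iλ)⁻¹ is compact, and moreover (D')^{-1/2} − D^{-1/2} is a compact operator. -/
/-!
The resolvent identity `(D' + iλ)⁻¹ - (D + iλ)⁻¹ = (D' + iλ)⁻¹ (D - D') (D + iλ)⁻¹` writes the
resolvent difference as a product with the compact factor `D - D'`; both resolvents exist because
`re ⟪(D + iλ) x, x⟫ = re ⟪D x, x⟫ ≥ ‖x‖²`.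

For the inverse square roots, `p(D') - p(D)` is compact for every real polynomial `p`, since the
compact operators form a two-sided ideal. As `D, D' ≥ 1`, the function `x ↦ x^{-1/2}` is
continuous on both spectra; approximating it uniformly there by polynomials (Weierstrass) and
using that the continuous functional calculus is isometric, `(D')^{-1/2} - D^{-1/2}` is a norm
limit of compact operators, hence compact.
-/

open Polynomial

section CompactOperators

variable {𝕜 E : Type*} [NontriviallyNormedField 𝕜] [NormedAddCommGroup E] [NormedSpace 𝕜 E]

theorem IsCompactOperator.clm_mul {K : E →L[𝕜] E} (hK : IsCompactOperator K) (A : E →L[𝕜] E) :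
    IsCompactOperator ⇑(A * K) :=
  hK.clm_comp A

theorem IsCompactOperator.mul_clm {K : E →L[𝕜] E} (hK : IsCompactOperator K) (A : E →L[𝕜] E) :
    IsCompactOperator ⇑(K * A) :=
  hK.comp_clm A

theorem isCompactOperator_pow_sub_pow {A B : E →L[𝕜] E} (h : IsCompactOperator ⇑(A - B)) :
    ∀ n : ℕ, IsCompactOperator ⇑(A ^ n - B ^ n)
  | 0 => by simpa using isCompactOperator_zero
  | n + 1 => by
    have hsplit : A ^ (n + 1) - B ^ (n + 1) = A * (A ^ n - B ^ n) + (A - B) * B ^ n := by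
      rw [pow_succ', pow_succ']; noncomm_ring
    rw [hsplit]
    exact ((isCompactOperator_pow_sub_pow h n).clm_mul A).add (h.mul_clm _)

theorem isCompactOperator_aeval_sub_aeval {R : Type*} [CommSemiring R] [Algebra R (E →L[𝕜] E)]
    {A B : E →L[𝕜] E} (h : IsCompactOperator ⇑(A - B)) (p : R[X]) :
    IsCompactOperator ⇑(aeval A p - aeval B p) := by
  induction p using Polynomial.induction_on' with
  | add p q hp hq =>
    rw [map_add, map_add, add_sub_add_comm]
    exact hp.add hq
  | monomial n r =>
    rw [aeval_monomial, aeval_monomial, ← mul_sub]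
    exact (isCompactOperator_pow_sub_pow h n).clm_mul _

theorem isCompactOperator_inverse_sub_inverse {S T : E →L[𝕜] E} (hST : IsUnit S ↔ IsUnit T)
    (h : IsCompactOperator ⇑(S - T)) :
    IsCompactOperator ⇑(Ring.inverse T - Ring.inverse S) := by
  rw [Ring.inverse_sub_inverse hST.symm]
  exact (h.clm_mul _).mul_clm _

end CompactOperators

theorem exists_polynomial_near_of_continuousOn_of_isCompact {s : Set ℝ} (hs : IsCompact s)
    {f : ℝ → ℝ} (hf : ContinuousOn f s) {ε : ℝ} (hε : 0 < ε) :
    ∃ p : ℝ[X], ∀ x ∈ s, |p.eval x - f x| < ε := by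
  have := isCompact_iff_compactSpace.mp hs
  let g : C(s, ℝ) := ⟨s.domRestrict f, hf.domRestrict⟩
  have hg : g ∈ (polynomialFunctions s).topologicalClosure := by
    rw [polynomialFunctions.topologicalClosure]; trivial
  obtain ⟨-, ⟨p, -, rfl⟩, hdist⟩ := Metric.mem_closure_iff.mp hg ε hε
  refine ⟨p, fun x hx => ?_⟩
  have := (ContinuousMap.dist_apply_le_dist ⟨x, hx⟩).trans_lt hdist
  rwa [Real.dist_eq, abs_sub_comm] at this

theorem norm_cfc_sub_aeval_le {A : Type*} [NormedRing A] [StarRing A] [NormedAlgebra ℝ A]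
    [IsometricContinuousFunctionalCalculus ℝ A IsSelfAdjoint] {a : A} (ha : IsSelfAdjoint a)
    {f : ℝ → ℝ} (hf : ContinuousOn f (spectrum ℝ a)) {p : ℝ[X]} {δ : ℝ} (hδ : 0 ≤ δ)
    (hp : ∀ x ∈ spectrum ℝ a, |p.eval x - f x| ≤ δ) :
    ‖cfc f a - aeval a p‖ ≤ δ := by
  rw [← cfc_polynomial p a, ← cfc_sub f p.eval a]
  refine norm_cfc_le hδ fun x hx => ?_
  rw [Real.norm_eq_abs, abs_sub_comm]
  exact hp x hx

section HilbertSpace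

variable {H : Type*} [NormedAddCommGroup H] [InnerProductSpace ℂ H]

theorem isCompactOperator_cfc_sub_cfc [CompleteSpace H] {A B : H →L[ℂ] H} (hA : IsSelfAdjoint A)
    (hB : IsSelfAdjoint B) (h : IsCompactOperator ⇑(A - B)) {f : ℝ → ℝ}
    (hf : ContinuousOn f (spectrum ℝ A ∪ spectrum ℝ B)) :
    IsCompactOperator ⇑(cfc f A - cfc f B) := by
  suffices cfc f A - cfc f B ∈ closure {T : H →L[ℂ] H | IsCompactOperator T} by
    rwa [isClosed_setOfPred_isCompactOperator.closure_eq] at this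
  refine Metric.mem_closure_iff.mpr fun ε hε => ?_
  obtain ⟨p, hp⟩ := exists_polynomial_near_of_continuousOn_of_isCompact
    ((spectrum.isCompact A).union (spectrum.isCompact B)) hf (by positivity : 0 < ε / 3)
  have hA_near : ‖cfc f A - aeval A p‖ ≤ ε / 3 :=
    norm_cfc_sub_aeval_le hA (hf.mono Set.subset_union_left) (by positivity)
      fun x hx => (hp x (Or.inl hx)).le
  have hB_near : ‖cfc f B - aeval B p‖ ≤ ε / 3 :=
    norm_cfc_sub_aeval_le hB (hf.mono Set.subset_union_right) (by positivity)
      fun x hx => (hp x (Or.inr hx)).le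
  refine ⟨aeval A p - aeval B p, isCompactOperator_aeval_sub_aeval h p, ?_⟩
  calc dist (cfc f A - cfc f B) (aeval A p - aeval B p)
      = ‖(cfc f A - aeval A p) - (cfc f B - aeval B p)‖ := by rw [dist_eq_norm]; abel_nf
    _ ≤ ε / 3 + ε / 3 := (norm_sub_le _ _).trans (add_le_add hA_near hB_near)
    _ < ε := by linarith

theorem re_inner_add_I_mul_smul_one_apply (T : H →L[ℂ] H) (l : ℝ) (x : H) :
    (inner ℂ ((T + (Complex.I * l) • (1 : H →L[ℂ] H)) x) x).re = (inner ℂ (T x) x).re := by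
  simp [← Complex.ofReal_pow]

theorem isUnit_add_I_mul_smul_one [CompleteSpace H] {T : H →L[ℂ] H}
    (hT : ∀ x : H, ‖x‖ ^ 2 ≤ (inner ℂ (T x) x).re) (l : ℝ) :
    IsUnit (T + (Complex.I * l) • (1 : H →L[ℂ] H)) := by
  refine ContinuousLinearMap.isUnit_of_forall_le_norm_inner_map _ one_pos fun x => ?_
  calc ‖x‖ ^ 2 * (1 : NNReal) = ‖x‖ ^ 2 := by simp
    _ ≤ (inner ℂ (T x) x).re := hT x
    _ = (inner ℂ ((T + (Complex.I * l) • (1 : H →L[ℂ] H)) x) x).re :=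
      (re_inner_add_I_mul_smul_one_apply T l x).symm
    _ ≤ ‖inner ℂ ((T + (Complex.I * l) • (1 : H →L[ℂ] H)) x) x‖ := Complex.re_le_norm _

theorem one_le_of_norm_sq_le_re_inner [CompleteSpace H] {T : H →L[ℂ] H} (hT : IsSelfAdjoint T)
    (h : ∀ x : H, ‖x‖ ^ 2 ≤ (inner ℂ (T x) x).re) : 1 ≤ T := by
  refine ContinuousLinearMap.isPositive_def'.mpr ⟨hT.sub (.one _), fun x => ?_⟩
  simpa [ContinuousLinearMap.reApplyInnerSelf, inner_sub_left, ← Complex.ofReal_pow] using h x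

end HilbertSpace

/-- If `D, D'` are bounded self-adjoint operators with `D ≥ I`, `D' ≥ I` and `D − D'` compact,
then every resolvent difference `(D' + iλ)⁻¹ − (D + iλ)⁻¹` is compact and
`(D')^{-1/2} − D^{-1/2}` is compact. -/
theorem stmt6 {H : Type*} [NormedAddCommGroup H] [InnerProductSpace ℂ H] [CompleteSpace H]
    (D D' : H →L[ℂ] H) (hD : IsSelfAdjoint D) (hD' : IsSelfAdjoint D')
    (hge : ∀ x : H, ‖x‖ ^ 2 ≤ (inner ℂ (D x) x : ℂ).re)
    (hge' : ∀ x : H, ‖x‖ ^ 2 ≤ (inner ℂ (D' x) x : ℂ).re)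
    (hcpt : IsCompactOperator ⇑(D - D')) :
    (∀ l : ℝ, IsCompactOperator
        ⇑(Ring.inverse (D' + (Complex.I * l) • (1 : H →L[ℂ] H)) -
          Ring.inverse (D + (Complex.I * l) • (1 : H →L[ℂ] H)))) ∧
    IsCompactOperator
      ⇑(cfc (fun x : ℝ => (Real.sqrt x)⁻¹) D' - cfc (fun x : ℝ => (Real.sqrt x)⁻¹) D) := by
  refine ⟨fun l => ?_, ?_⟩
  · refine isCompactOperator_inverse_sub_inverse
      (iff_of_true (isUnit_add_I_mul_smul_one hge l) (isUnit_add_I_mul_smul_one hge' l)) ?_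
    rwa [add_sub_add_right_eq_sub]
  · have hspec {T : H →L[ℂ] H} (hT : IsSelfAdjoint T)
        (h : ∀ x : H, ‖x‖ ^ 2 ≤ (inner ℂ (T x) x).re) : spectrum ℝ T ⊆ Set.Ioi 0 :=
      fun t ht => one_pos.trans_le <|
        (CFC.one_le_iff T hT).mp (one_le_of_norm_sq_le_re_inner hT h) t ht
    have hcont : ContinuousOn (fun x : ℝ => (Real.sqrt x)⁻¹) (Set.Ioi 0) :=
      Real.continuous_sqrt.continuousOn.inv₀ fun x hx => (Real.sqrt_pos.mpr hx).ne'
    refine isCompactOperator_cfc_sub_cfc hD' hD ?_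
      (hcont.mono (Set.union_subset (hspec hD' hge') (hspec hD hge)))
    rw [← neg_sub]
    exact hcpt.neg
end
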